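/- Lemma 3.4 (similarity transformation, pointwise form). Assume ρ ≠ 0 and write ρ = |ρ| e^{iφ} with φ ∈ [0,2π); set η := (1/(2π)) ( ∫₀^{2π} V(t) dt − i (ln|ρ| + iφ) ), W(x) := exp(−i ∫₀ˣ V(t) dt + iηx) for x ∈ [0,2π], and K(x) := W(x) k(x) / W(2π). Then W(2π) = ρ, and for every f : [0,2π] → ℂ that is absolutely continuous with derivative f′ and satisfies f(0) = ρ f(2π), the function h := W·f is absolutely continuous with some derivative h′, satisfies h(0) = h(2π), and for almost every x ∈ (0,2π): i h′(x) + h(2π) K(x) + η h(x) = W(x) · ( i f′(x) + V(x) f(x) + f(2π) k(x) ). -/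

import Mathlib

open MeasureTheory Real Complex

/-- `f : [0,2π] → ℂ` is absolutely continuous with derivative `f'`:
`f' ∈ L¹(0,2π)` and `f x = f 0 + ∫₀ˣ f'` for all `x ∈ [0,2π]`. -/
def IsACWithDeriv (f f' : ℝ → ℂ) : Prop :=
  MeasureTheory.IntegrableOn f' (Set.Ioc 0 (2 * Real.pi)) ∧
    ∀ x ∈ Set.Icc (0:ℝ) (2 * Real.pi), f x = f 0 + ∫ t in (0:ℝ)..x, f' t

/-!
Write `W = exp ∘ A` with `A x = -i ∫₀ˣ V + i η x`. Primitives of integrable functions are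
absolutely continuous, hence so are `A`, `f`, `W` and `W f`, and by the Lebesgue differentiation
theorem `W f` has a.e. derivative `W (f' + A' f)` with `A' = -i V + i η`. The fundamental theorem
of calculus for absolutely continuous functions then exhibits `W f` as the primitive of this
derivative. The choice of `η` makes `A (2π) = log ‖ρ‖ + i φ`, so `W (2π) = ρ`, which turns
`f 0 = ρ f (2π)` into periodicity of `W f`; the a.e. identity is then algebra with `i² = -1`.
-/

open Set Filter

section AbsolutelyContinuous

variable {X : Type*} [PseudoMetricSpace X] {a b : ℝ}

theorem AbsolutelyContinuousOnInterval.congr {f g : ℝ → X}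
    (hf : AbsolutelyContinuousOnInterval f a b) (hfg : EqOn f g (uIcc a b)) :
    AbsolutelyContinuousOnInterval g a b := by
  refine Tendsto.congr' ?_ hf
  refine eventually_inf_principal.2 (Eventually.of_forall fun E hE => ?_)
  exact Finset.sum_congr rfl fun i hi => by rw [hfg (hE.1 i hi).1, hfg (hE.1 i hi).2]

theorem LipschitzOnWith.comp_absolutelyContinuousOnInterval {Y : Type*} [PseudoMetricSpace Y]
    {φ : X → Y} {K : NNReal} {s : Set X} {g : ℝ → X} (hφ : LipschitzOnWith K φ s)
    (hg : AbsolutelyContinuousOnInterval g a b) (hgs : MapsTo g (uIcc a b) s) :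
    AbsolutelyContinuousOnInterval (φ ∘ g) a b := by
  refine squeeze_zero' (Eventually.of_forall fun E => Finset.sum_nonneg fun _ _ => dist_nonneg)
    ?_ (by simpa using Tendsto.const_mul (K : ℝ) hg)
  refine eventually_inf_principal.2 (Eventually.of_forall fun E hE => ?_)
  rw [Finset.mul_sum]
  exact Finset.sum_le_sum fun i hi =>
    hφ.dist_le_mul _ (hgs (hE.1 i hi).1) _ (hgs (hE.1 i hi).2)

theorem AbsolutelyContinuousOnInterval.cexp {A : ℝ → ℂ}
    (hA : AbsolutelyContinuousOnInterval A a b) :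
    AbsolutelyContinuousOnInterval (fun x => exp (A x)) a b := by
  obtain ⟨R, hR⟩ := hA.exists_bound
  obtain ⟨K, hK⟩ := ((contDiff_exp (𝕜 := ℂ) (n := 1)).contDiffOn.restrict_scalars ℝ
    ).exists_lipschitzOnWith one_ne_zero (convex_closedBall (0 : ℂ) R) (isCompact_closedBall 0 R)
  exact hK.comp_absolutelyContinuousOnInterval hA fun x hx => mem_closedBall_zero_iff.2 (hR x hx)

variable {E : Type*} [NormedAddCommGroup E] [NormedSpace ℝ E] {F u : ℝ → E}

/-- Since `‖∫ₓʸ u‖ ≤ |∫ₓʸ ‖u‖|`, this follows from the real-valued case applied to `‖u‖`. -/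
theorem IntervalIntegrable.absolutelyContinuousOnInterval_intervalIntegral' {c : ℝ}
    (hu : IntervalIntegrable u volume a b) (hc : c ∈ uIcc a b) :
    AbsolutelyContinuousOnInterval (fun x => ∫ t in c..x, u t) a b := by
  refine squeeze_zero' (Eventually.of_forall fun E => Finset.sum_nonneg fun _ _ => dist_nonneg)
    ?_ (hu.norm.absolutelyContinuousOnInterval_intervalIntegral hc)
  refine eventually_inf_principal.2 (Eventually.of_forall fun I hI =>
    Finset.sum_le_sum fun i hi => ?_)
  have hcx : ∀ x ∈ uIcc a b, IntervalIntegrable u volume c x :=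
    fun x hx => hu.mono_set (uIcc_subset_uIcc hc hx)
  rw [dist_eq_norm, Real.dist_eq,
    intervalIntegral.integral_interval_sub_left (hcx _ (hI.1 i hi).1) (hcx _ (hI.1 i hi).2),
    intervalIntegral.integral_interval_sub_left (hcx _ (hI.1 i hi).1).norm
      (hcx _ (hI.1 i hi).2).norm]
  exact intervalIntegral.norm_integral_le_abs_integral_norm

theorem absolutelyContinuousOnInterval_of_eq_add_integral (hab : a ≤ b)
    (hu : IntervalIntegrable u volume a b)
    (hF : ∀ x ∈ Icc a b, F x = F a + ∫ t in a..x, u t) :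
    AbsolutelyContinuousOnInterval F a b := by
  refine (((LipschitzWith.const (F a)).lipschitzOnWith (s := uIcc a b)
    ).absolutelyContinuousOnInterval.add
      (hu.absolutelyContinuousOnInterval_intervalIntegral' left_mem_uIcc)).congr fun x hx => ?_
  rw [uIcc_of_le hab] at hx
  exact (hF x hx).symm

variable [CompleteSpace E]

theorem ae_hasDerivAt_of_eq_add_integral
    (hu : IntervalIntegrable u volume a b)
    (hF : ∀ x ∈ Icc a b, F x = F a + ∫ t in a..x, u t) :
    ∀ᵐ x, x ∈ Ioo a b → HasDerivAt F (u x) x := by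
  filter_upwards [hu.ae_hasDerivAt_integral] with x hx hxab
  have hx' : x ∈ uIcc a b := Icc_subset_uIcc (Ioo_subset_Icc_self hxab)
  refine ((hx hx' a left_mem_uIcc).const_add (F a)).congr_of_eventuallyEq ?_
  filter_upwards [Ioo_mem_nhds hxab.1 hxab.2] with y hy using hF y (Ioo_subset_Icc_self hy)

theorem AbsolutelyContinuousOnInterval.eq_add_integral_of_ae_hasDerivAt
    (hab : a ≤ b) (hF : AbsolutelyContinuousOnInterval F a b)
    (hu : IntervalIntegrable u volume a b) (hd : ∀ᵐ x, x ∈ Ioo a b → HasDerivAt F (u x) x) :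
    ∀ x ∈ Icc a b, F x = F a + ∫ t in a..x, u t := by
  obtain ⟨C, hC⟩ := (hF.sub (hu.absolutelyContinuousOnInterval_intervalIntegral'
    left_mem_uIcc)).const_of_ae_hasDerivAt_zero (by
      filter_upwards [hd, hu.ae_hasDerivAt_integral, (Ioo_ae_eq_Icc (a := a) (b := b)).mem_iff]
        with x hFx hI hIoo hx
      rw [uIcc_of_le hab] at hI hx
      simpa using (hFx (hIoo.2 hx)).sub (hI hx a (left_mem_Icc.2 hab)))
  intro x hx
  have hCx := hC x (Icc_subset_uIcc hx)
  have hCa := hC a left_mem_uIcc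
  simp only [Pi.sub_apply, intervalIntegral.integral_same, sub_zero] at hCx hCa
  rw [hCa, ← hCx]
  abel

theorem AbsolutelyContinuousOnInterval.cexp_mul_eq_add_integral {A c f f' : ℝ → ℂ}
    (hab : a ≤ b) (hA : AbsolutelyContinuousOnInterval A a b)
    (hc : IntervalIntegrable c volume a b) (hA' : ∀ᵐ x, x ∈ Ioo a b → HasDerivAt A (c x) x)
    (hf' : IntervalIntegrable f' volume a b)
    (hf : ∀ x ∈ Icc a b, f x = f a + ∫ t in a..x, f' t) :
    IntervalIntegrable (fun x => exp (A x) * (f' x + c x * f x)) volume a b ∧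
      ∀ x ∈ Icc a b, exp (A x) * f x
        = exp (A a) * f a + ∫ t in a..x, exp (A t) * (f' t + c t * f t) := by
  have hfAC := absolutelyContinuousOnInterval_of_eq_add_integral hab hf' hf
  have hint : IntervalIntegrable (fun x => exp (A x) * (f' x + c x * f x)) volume a b :=
    (hf'.add (hc.mul_continuousOn hfAC.continuousOn)).continuousOn_mul hA.cexp.continuousOn
  refine ⟨hint, (hA.cexp.fun_smul hfAC).eq_add_integral_of_ae_hasDerivAt hab hint ?_⟩
  filter_upwards [hA', ae_hasDerivAt_of_eq_add_integral hf' hf] with x hAx hfx hx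
  exact ((hAx hx).cexp.mul (hfx hx)).congr_deriv (by ring)

end AbsolutelyContinuous

theorem similarity_transformation_general
    (V k : ℝ → ℂ)
    (hV : MeasureTheory.MemLp V ⊤ (MeasureTheory.volume.restrict (Set.Ioo 0 (2 * Real.pi))))
    (ρ : ℂ) (hρ : ρ ≠ 0) (φ : ℝ)
    (hρφ : ρ = ((‖ρ‖ : ℝ) : ℂ) * Complex.exp (Complex.I * φ))
    (η : ℂ)
    (hη : η = (1 / (2 * Real.pi : ℂ)) *
      ((∫ t in (0:ℝ)..(2 * Real.pi), V t)
        - Complex.I * ((Real.log ‖ρ‖ : ℂ) + Complex.I * φ)))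
    (W : ℝ → ℂ)
    (hW : ∀ x : ℝ, W x =
      Complex.exp (-(Complex.I * ∫ t in (0:ℝ)..x, V t) + Complex.I * η * x))
    (Kf : ℝ → ℂ) (hKf : ∀ x : ℝ, Kf x = W x * k x / W (2 * Real.pi)) :
    W (2 * Real.pi) = ρ ∧
    ∀ f f' : ℝ → ℂ, IsACWithDeriv f f' → f 0 = ρ * f (2 * Real.pi) →
      ∃ h' : ℝ → ℂ, IsACWithDeriv (fun x => W x * f x) h' ∧
        W 0 * f 0 = W (2 * Real.pi) * f (2 * Real.pi) ∧
        ∀ᵐ x ∂(MeasureTheory.volume.restrict (Set.Ioo 0 (2 * Real.pi))),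
          Complex.I * h' x + W (2 * Real.pi) * f (2 * Real.pi) * Kf x
              + η * (W x * f x)
            = W x * (Complex.I * f' x + V x * f x + f (2 * Real.pi) * k x) := by
  have h2π : (0 : ℝ) ≤ 2 * π := by positivity
  have hVi : IntervalIntegrable V volume 0 (2 * π) :=
    (intervalIntegrable_iff_integrableOn_Ioo_of_le h2π).2 (hV.integrable le_top)
  set c : ℝ → ℂ := fun t => -(I * V t) + I * η
  set A : ℝ → ℂ := fun x => -(I * ∫ t in (0:ℝ)..x, V t) + I * η * x
  have hA : AbsolutelyContinuousOnInterval A 0 (2 * π) :=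
    ((hVi.absolutelyContinuousOnInterval_intervalIntegral' left_mem_uIcc).const_smul I).neg.add
      (contDiff_const.mul ofRealCLM.contDiff).contDiffOn.absolutelyContinuousOnInterval
  have hA' : ∀ᵐ x, x ∈ Ioo 0 (2 * π) → HasDerivAt A (c x) x := by
    filter_upwards [hVi.ae_hasDerivAt_integral] with x hx hxI
    exact ((hx (Icc_subset_uIcc (Ioo_subset_Icc_self hxI)) 0 left_mem_uIcc).const_mul I).neg.add
      (by simpa using ((hasDerivAt_id x).ofReal_comp).const_mul (I * η))
  have hW2π : W (2 * π) = ρ := calc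
    W (2 * π) = exp (Real.log ‖ρ‖ + I * φ) := by
      rw [hW, hη]
      congr 1
      push_cast
      field_simp
      linear_combination (-(Real.log ‖ρ‖ + I * φ)) * I_mul_I
    _ = ρ := by rw [Complex.exp_add, ← ofReal_exp, Real.exp_log (norm_pos_iff.2 hρ), ← hρφ]
  refine ⟨hW2π, fun f f' hf hper => ?_⟩
  obtain ⟨hint, hrep⟩ := hA.cexp_mul_eq_add_integral (c := c) h2π
    ((hVi.const_mul I).neg.add intervalIntegrable_const) hA'
    ((intervalIntegrable_iff_integrableOn_Ioc_of_le h2π).2 hf.1) hf.2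
  have hWA : ∀ x, exp (A x) = W x := fun x => (hW x).symm
  simp only [hWA] at hint hrep
  refine ⟨_, ⟨(intervalIntegrable_iff_integrableOn_Ioc_of_le h2π).1 hint, hrep⟩, ?_,
    Eventually.of_forall fun x => ?_⟩
  · rw [hW 0, hper, hW2π]
    simp
  · rw [hKf, hW2π]
    field_simp
    linear_combination (η - V x) * W x * f x * I_mul_I

/-- Lemma 3.4 (similarity transformation, pointwise form): with `ρ = |ρ|e^{iφ}`,
`η = (2π)^{−1}(∫₀^{2π}V − i(ln|ρ| + iφ))`, `W(x) = exp(−i∫₀ˣV + iηx)` and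
`K = W·k/W(2π)`, one has `W(2π) = ρ`, and for every `f` absolutely continuous with
`f(0) = ρ f(2π)`, the function `h = W·f` is absolutely continuous, periodic,
and satisfies `i h' + h(2π)K + ηh = W·(i f' + V f + f(2π) k)` a.e. on `(0,2π)`. -/
theorem similarity_transformation
    (V k : ℝ → ℂ)
    (hV : MeasureTheory.MemLp V ⊤ (MeasureTheory.volume.restrict (Set.Ioo 0 (2 * Real.pi))))
    (hk : MeasureTheory.MemLp k 2 (MeasureTheory.volume.restrict (Set.Ioo 0 (2 * Real.pi))))
    (ρ : ℂ) (hρ : ρ ≠ 0) (φ : ℝ) (hφ0 : 0 ≤ φ) (hφ2 : φ < 2 * Real.pi)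
    (hρφ : ρ = ((‖ρ‖ : ℝ) : ℂ) * Complex.exp (Complex.I * φ))
    (η : ℂ)
    (hη : η = (1 / (2 * Real.pi : ℂ)) *
      ((∫ t in (0:ℝ)..(2 * Real.pi), V t)
        - Complex.I * ((Real.log ‖ρ‖ : ℂ) + Complex.I * φ)))
    (W : ℝ → ℂ)
    (hW : ∀ x : ℝ, W x =
      Complex.exp (-(Complex.I * ∫ t in (0:ℝ)..x, V t) + Complex.I * η * x))
    (Kf : ℝ → ℂ) (hKf : ∀ x : ℝ, Kf x = W x * k x / W (2 * Real.pi)) :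
    W (2 * Real.pi) = ρ ∧
    ∀ f f' : ℝ → ℂ, IsACWithDeriv f f' → f 0 = ρ * f (2 * Real.pi) →
      ∃ h' : ℝ → ℂ, IsACWithDeriv (fun x => W x * f x) h' ∧
        W 0 * f 0 = W (2 * Real.pi) * f (2 * Real.pi) ∧
        ∀ᵐ x ∂(MeasureTheory.volume.restrict (Set.Ioo 0 (2 * Real.pi))),
          Complex.I * h' x + W (2 * Real.pi) * f (2 * Real.pi) * Kf x
              + η * (W x * f x)
            = W x * (Complex.I * f' x + V x * f x + f (2 * Real.pi) * k x) :=
  similarity_transformation_general V k hV ρ hρ φ hρφ η hη W hW Kf hKf
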